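/- arXiv:2111.09020 — 4 statements merged into one kernel-verified Lean document; each statement's English description precedes it below -/
import Mathlib

section
/- Let V ⊆ ℝ² be an open set, let X, Y : V → ℝ be continuous with X continuously nonvanishing on V, and let ε ∈ {−1, 1} be such that εX(p) > 0 for all p ∈ V. Fix x, x₁ ∈ ℝ, set τ = ε(x₁ − x), and suppose y : ℝ → ℝ is a function, differentiable on the closed interval I between 0 and τ, such that y(0) = 0, y(τ) = 0, (x + εs, y(s)) ∈ V for all s ∈ I, and y'(s) = ε Y(x + εs, y(s))/X(x + εs, y(s)) for all s ∈ I. Define T = (x₁ − x) ∫₀¹ 1/X(x + (x₁ − x)t, y(ε(x₁ − x)t)) dt. Then there exists a differentiable curve σ defined on the closed interval between 0 and T, with values in V, such that σ(0) = (x, 0), σ(T) = (x₁, 0), and σ'(t) = (X(σ(t)), Y(σ(t))) for all t in that interval. -/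
/-!
Let `γ(s) = (x + εs, y(s))`. The ODE for `y` says `γ' = g • (X, Y) ∘ γ` with
`g = 1 / (εX ∘ γ) > 0`, so `γ` is a trajectory of the positively rescaled field. Writing
`B(s) = ∫₀ˢ g`, which is strictly increasing, the curve `σ = γ ∘ B⁻¹` satisfies
`σ' = (X, Y) ∘ σ` by the chain rule and the inverse function rule, and it reaches `γ(τ)` at
time `B(τ)`; the substitution `s = τt` turns `B(τ)` into `T`. To invert `B` globally, `g` is
first extended from the interval to a continuous function on `ℝ` bounded below by a positive
constant, which makes `B` an order isomorphism of `ℝ`.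
-/

open Set Filter

theorem Continuous.surjective_of_expanding {f : ℝ → ℝ} (hf : Continuous f) {m : ℝ}
    (hm : 0 < m) (hexp : ∀ a b, a ≤ b → m * (b - a) ≤ f b - f a) :
    Function.Surjective f := by
  refine hf.surjective ?_ ?_
  · refine tendsto_atTop_mono' _ ?_ (tendsto_atTop_add_const_left _ (f 0)
      (tendsto_id.const_mul_atTop hm))
    filter_upwards [eventually_ge_atTop 0] with s hs
    simp only [id]
    linarith [hexp 0 s hs]
  · refine tendsto_atBot_mono' _ ?_ (tendsto_atBot_add_const_left _ (f 0)
      (tendsto_id.const_mul_atBot hm))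
    filter_upwards [eventually_le_atBot 0] with s hs
    simp only [id]
    linarith [hexp s 0 hs]

theorem mul_sub_le_integral_sub_integral {h : ℝ → ℝ} (hh : Continuous h) {m : ℝ}
    (hmh : ∀ s, m ≤ h s) {a b : ℝ} (hab : a ≤ b) :
    m * (b - a) ≤ (∫ u in (0 : ℝ)..b, h u) - ∫ u in (0 : ℝ)..a, h u := by
  rw [intervalIntegral.integral_interval_sub_left (hh.intervalIntegrable 0 b)
    (hh.intervalIntegrable 0 a)]
  have : ∫ _ in a..b, m ≤ ∫ u in a..b, h u := intervalIntegral.integral_mono_on hab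
    intervalIntegrable_const (hh.intervalIntegrable a b) fun u _ => hmh u
  rwa [intervalIntegral.integral_const, smul_eq_mul, mul_comm] at this

theorem exists_orderIso_eq_integral {h : ℝ → ℝ} (hh : Continuous h) {m : ℝ} (hm : 0 < m)
    (hmh : ∀ s, m ≤ h s) : ∃ e : ℝ ≃o ℝ, ∀ s, e s = ∫ u in (0 : ℝ)..s, h u := by
  set B : ℝ → ℝ := fun s => ∫ u in (0 : ℝ)..s, h u
  have hexp : ∀ a b, a ≤ b → m * (b - a) ≤ B b - B a := fun a b =>
    mul_sub_le_integral_sub_integral hh hmh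
  have hmono : StrictMono B := fun a b hab => by nlinarith [hexp a b hab.le]
  have hcont : Continuous B :=
    intervalIntegral.continuous_primitive (fun _ _ => hh.intervalIntegrable _ _) 0
  exact ⟨StrictMono.orderIsoOfSurjective B hmono (hcont.surjective_of_expanding hm hexp),
    fun _ => rfl⟩

theorem ContinuousOn.exists_continuous_extension_ge_pos {g : ℝ → ℝ} {a b : ℝ}
    (hg : ContinuousOn g (uIcc a b)) (hpos : ∀ s ∈ uIcc a b, 0 < g s) :
    ∃ h : ℝ → ℝ, Continuous h ∧ EqOn h g (uIcc a b) ∧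
      ∃ m, 0 < m ∧ ∀ s, m ≤ h s := by
  set p := projIcc (min a b) (max a b) min_le_max
  obtain ⟨z, hz, hzmin⟩ := isCompact_uIcc.exists_isMinOn nonempty_uIcc hg
  refine ⟨fun s => g (p s), ?_, fun s hs => ?_, g z, hpos z hz, fun s => hzmin (p s).2⟩
  · exact hg.comp_continuous (continuous_subtype_val.comp continuous_projIcc) fun s => (p s).2
  · simp only [p, projIcc_of_mem _ hs]

theorem exists_reparametrization_of_hasDerivAt_smul {E : Type*} [NormedAddCommGroup E]
    [NormedSpace ℝ E] (Z : E → E) (γ : ℝ → E) (g : ℝ → ℝ) (τ : ℝ)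
    (hg : ContinuousOn g (uIcc 0 τ)) (hpos : ∀ s ∈ uIcc 0 τ, 0 < g s)
    (hγ : ∀ s ∈ uIcc 0 τ, HasDerivAt γ (g s • Z (γ s)) s) :
    ∃ σ : ℝ → E, σ 0 = γ 0 ∧ σ (∫ s in (0 : ℝ)..τ, g s) = γ τ ∧
      ∀ t ∈ uIcc 0 (∫ s in (0 : ℝ)..τ, g s),
        σ t ∈ γ '' uIcc 0 τ ∧ HasDerivAt σ (Z (σ t)) t := by
  obtain ⟨h, hh, hgh, m, hm, hmh⟩ := hg.exists_continuous_extension_ge_pos hpos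
  obtain ⟨e, he⟩ := exists_orderIso_eq_integral hh hm hmh
  have he0 : e.symm 0 = 0 := by rw [e.symm_apply_eq, he, intervalIntegral.integral_same]
  have heτ : ∫ s in (0 : ℝ)..τ, g s = e τ := by
    rw [he]; exact intervalIntegral.integral_congr hgh.symm
  have hderiv (t : ℝ) : HasDerivAt e.symm (h (e.symm t))⁻¹ t := by
    have hB : HasDerivAt e (h (e.symm t)) (e.symm t) := by
      rw [show ⇑e = fun s => ∫ u in (0 : ℝ)..s, h u from funext he]
      exact (hh.integral_hasStrictDerivAt 0 _).hasDerivAt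
    exact hB.of_local_left_inverse e.symm.continuous.continuousAt
      (hm.trans_le (hmh _)).ne' (Eventually.of_forall e.apply_symm_apply)
  refine ⟨γ ∘ e.symm, by simp [he0], by simp [heτ], fun t ht => ?_⟩
  have hs : e.symm t ∈ uIcc 0 τ := by
    simpa [he0, heτ] using e.symm.monotone.mapsTo_uIcc ht
  refine ⟨⟨_, hs, rfl⟩, ?_⟩
  have := (hγ _ hs).scomp t (hderiv t)
  rwa [hgh hs, inv_smul_smul₀ (hpos _ hs).ne'] at this

theorem hasDerivAt_add_mul_prodMk {X Y : ℝ × ℝ → ℝ} {ε x s : ℝ} {y : ℝ → ℝ}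
    (hε : ε * ε = 1) (hX : X (x + ε * s, y s) ≠ 0)
    (hy : HasDerivAt y (ε * Y (x + ε * s, y s) / X (x + ε * s, y s)) s) :
    HasDerivAt (fun s => (x + ε * s, y s))
      ((ε * X (x + ε * s, y s))⁻¹ • (X (x + ε * s, y s), Y (x + ε * s, y s))) s := by
  refine ((((hasDerivAt_id s).const_mul ε).const_add x).prodMk hy).congr_deriv ?_
  simp only [Prod.smul_mk, smul_eq_mul, mul_inv, (eq_inv_of_mul_eq_one_left hε).symm]
  ext <;> field_simp

theorem mul_integral_one_div_comp_mul_left {ε : ℝ} (hε : ε * ε = 1) (f : ℝ → ℝ)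
    (τ : ℝ) :
    ε * τ * ∫ t in (0 : ℝ)..1, 1 / f (τ * t) = ∫ s in (0 : ℝ)..τ, (ε * f s)⁻¹ := by
  simp_rw [mul_inv, (eq_inv_of_mul_eq_one_left hε).symm, ← one_div]
  rw [intervalIntegral.integral_const_mul, mul_assoc,
    intervalIntegral.mul_integral_comp_mul_left (f := fun s => 1 / f s), mul_zero, mul_one]

theorem stmt4_general (V : Set (ℝ × ℝ))
    (X Y : ℝ × ℝ → ℝ) (hX : ContinuousOn X V)
    (ε : ℝ) (hε : ε = -1 ∨ ε = 1) (hXpos : ∀ p ∈ V, 0 < ε * X p)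
    (x x₁ τ : ℝ) (hτ : τ = ε * (x₁ - x))
    (y : ℝ → ℝ) (hy0 : y 0 = 0) (hyτ : y τ = 0)
    (hyV : ∀ s ∈ Set.uIcc 0 τ, (x + ε * s, y s) ∈ V)
    (hyode : ∀ s ∈ Set.uIcc 0 τ,
      HasDerivAt y (ε * Y (x + ε * s, y s) / X (x + ε * s, y s)) s)
    (T : ℝ)
    (hT : T = (x₁ - x) * ∫ t in (0:ℝ)..1,
      1 / X (x + (x₁ - x) * t, y (ε * (x₁ - x) * t))) :
    ∃ σ : ℝ → ℝ × ℝ, σ 0 = (x, 0) ∧ σ T = (x₁, 0) ∧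
      ∀ t ∈ Set.uIcc 0 T, σ t ∈ V ∧ HasDerivAt σ (X (σ t), Y (σ t)) t := by
  have hε2 : ε * ε = 1 := by rcases hε with rfl | rfl <;> norm_num
  have hx : x₁ - x = ε * τ := by rw [hτ, ← mul_assoc, hε2, one_mul]
  set γ : ℝ → ℝ × ℝ := fun s => (x + ε * s, y s)
  have hγc : ContinuousOn γ (uIcc 0 τ) :=
    (continuous_const.add (continuous_const.mul continuous_id)).continuousOn.prodMk
      fun s hs => (hyode s hs).continuousAt.continuousWithinAt
  have hTg : T = ∫ s in (0 : ℝ)..τ, (ε * X (γ s))⁻¹ := by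
    rw [hT, hx, ← mul_integral_one_div_comp_mul_left hε2 (fun s => X (γ s))]
    congr 2 with t
    rw [show ε * (ε * τ) * t = τ * t by linear_combination τ * t * hε2, mul_assoc]
  have hXγ (s : ℝ) (hs : s ∈ uIcc 0 τ) : 0 < ε * X (γ s) := hXpos _ (hyV s hs)
  obtain ⟨σ, hσ0, hστ, hσ⟩ := exists_reparametrization_of_hasDerivAt_smul
    (fun p => (X p, Y p)) γ (fun s => (ε * X (γ s))⁻¹) τ
    ((continuousOn_const.mul (hX.comp hγc hyV)).inv₀ fun s hs => (hXγ s hs).ne')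
    (fun s hs => inv_pos.2 (hXγ s hs))
    (fun s hs => hasDerivAt_add_mul_prodMk hε2 (right_ne_zero_of_mul (hXγ s hs).ne') (hyode s hs))
  refine ⟨σ, by simp [hσ0, γ, hy0], ?_, fun t ht => ?_⟩
  · rw [hTg, hστ]
    simp only [γ, hyτ, ← hx, add_sub_cancel]
  · obtain ⟨⟨s, hs, hσs⟩, hd⟩ := hσ t (hTg ▸ ht)
    exact ⟨hσs ▸ hyV s hs, hd⟩

/-- one-field content of Theorem B.
If `y` solves `y' = ε Y/X (x + εs, y(s))` on the interval between `0` and `τ = ε(x₁ − x)`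
with `y(0) = y(τ) = 0` and the curve `(x + εs, y(s))` stays in `V` where `εX > 0`, then,
setting `T = (x₁ − x) ∫₀¹ 1/X(x + (x₁ − x)t, y(ε(x₁ − x)t)) dt`, there is a differentiable
curve `σ` on the interval between `0` and `T`, with values in `V`, with `σ(0) = (x, 0)`,
`σ(T) = (x₁, 0)`, and `σ'(t) = (X(σ(t)), Y(σ(t)))`. -/
theorem stmt4 (V : Set (ℝ × ℝ)) (hV : IsOpen V)
    (X Y : ℝ × ℝ → ℝ) (hX : ContinuousOn X V) (hY : ContinuousOn Y V)
    (ε : ℝ) (hε : ε = -1 ∨ ε = 1) (hXpos : ∀ p ∈ V, 0 < ε * X p)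
    (x x₁ τ : ℝ) (hτ : τ = ε * (x₁ - x))
    (y : ℝ → ℝ) (hy0 : y 0 = 0) (hyτ : y τ = 0)
    (hyV : ∀ s ∈ Set.uIcc 0 τ, (x + ε * s, y s) ∈ V)
    (hyode : ∀ s ∈ Set.uIcc 0 τ,
      HasDerivAt y (ε * Y (x + ε * s, y s) / X (x + ε * s, y s)) s)
    (T : ℝ)
    (hT : T = (x₁ - x) * ∫ t in (0:ℝ)..1,
      1 / X (x + (x₁ - x) * t, y (ε * (x₁ - x) * t))) :
    ∃ σ : ℝ → ℝ × ℝ, σ 0 = (x, 0) ∧ σ T = (x₁, 0) ∧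
      ∀ t ∈ Set.uIcc 0 T, σ t ∈ V ∧ HasDerivAt σ (X (σ t), Y (σ t)) t :=
  stmt4_general V X Y hX ε hε hXpos x x₁ τ hτ y hy0 hyτ hyV hyode T hT
end

section
/- Let V ⊆ ℝ² be an open neighborhood of the origin, let X⁺, X⁻ : V → ℝ be continuous and nonvanishing on V with X⁺(0,0) X⁻(0,0) < 0, and set δ = sign(X⁺(0,0)). Let φ : ℝ → ℝ satisfy φ(0) = 0 and be differentiable at 0 with φ'(0) = −1, and let y⁺, y⁻ : ℝ × ℝ → ℝ be continuous on a neighborhood of (0, 0) with y⁺(0, 0) = y⁻(0, 0) = 0. For x near 0 define T^±(x) = (φ(x) − x) ∫₀¹ 1/X^±(x + (φ(x) − x)t, y^±(±δ(φ(x) − x)t, x)) dt and T(x) = δ(T⁻(x) − T⁺(x)). Then T(0) = 0 and T is differentiable at 0 with T'(0) = 2δ (X⁻(0,0) − X⁺(0,0)) / (X⁺(0,0) X⁻(0,0)) > 0. -/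
/-!
Write `T(x) = (φ(x) − x) · δ (I⁻(x) − I⁺(x))`, where `I^±` are the two integrals. Since
`φ(x) − x` vanishes at `0` with derivative `−2`, the derivative of `T` at `0` is `−2δ` times
the limit of `I⁻ − I⁺`, and no regularity of `I^±` is needed beyond that limit. As `x → 0` the
integrands `1/X^±(…)` converge to `1/X^±(0,0)` uniformly in `t ∈ [0,1]`, because their
arguments shrink to the origin uniformly in `t`; dominated convergence then gives
`I^±(x) → 1/X^±(0,0)`.
-/

open Filter Topology MeasureTheory Set Interval

theorem intervalIntegral.tendsto_integral_of_tendsto_uncurry {ι E : Type*}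
    [NormedAddCommGroup E] [NormedSpace ℝ E] [CompleteSpace E]
    {l : Filter ι} [l.IsCountablyGenerated] {f : ι → ℝ → E} {a b : ℝ} {L : E}
    (hmeas : ∀ᶠ x in l, AEStronglyMeasurable (f x) (volume.restrict (Ι a b)))
    (hf : Tendsto (Function.uncurry f) (l ×ˢ 𝓟 (Ι a b)) (𝓝 L)) :
    Tendsto (fun x => ∫ t in a..b, f x t) l (𝓝 ((b - a) • L)) := by
  have hbound : ∀ᶠ x in l, ∀ t ∈ Ι a b, ‖f x t‖ ≤ ‖L‖ + 1 := by
    filter_upwards [eventually_prod_principal_iff.1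
      (hf.norm.eventually (gt_mem_nhds (lt_add_one ‖L‖)))] with x hx t ht using (hx t ht).le
  have hlim (t : ℝ) (ht : t ∈ Ι a b) : Tendsto (fun x => f x t) l (𝓝 L) :=
    hf.comp (tendsto_id.prodMk (tendsto_principal.2 (Eventually.of_forall fun _ => ht)))
  rw [← intervalIntegral.integral_const]
  exact intervalIntegral.tendsto_integral_filter_of_dominated_convergence _ hmeas
    (hbound.mono fun x hx => ae_of_all _ (hx ·)) intervalIntegrable_const (ae_of_all _ hlim)

theorem HasDerivAt.mul_tendsto_of_apply_eq_zero {𝕜 : Type*} [NontriviallyNormedField 𝕜]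
    {f g : 𝕜 → 𝕜} {f' L x : 𝕜} (hf : HasDerivAt f f' x) (hfx : f x = 0)
    (hg : Tendsto g (𝓝[≠] x) (𝓝 L)) :
    HasDerivAt (fun y => f y * g y) (f' * L) x := by
  rw [hasDerivAt_iff_tendsto_slope] at hf ⊢
  refine (hf.mul hg).congr' (Eventually.of_forall fun y => ?_)
  simp only [slope_def_field, hfx, zero_mul, sub_zero]
  ring

theorem tendsto_integral_one_div_along_chord {V W : Set (ℝ × ℝ)} (hV : V ∈ 𝓝 (0, 0))
    (hW : W ∈ 𝓝 (0, 0)) {X y : ℝ × ℝ → ℝ} (hX : ContinuousOn X V) (hX0 : X (0, 0) ≠ 0)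
    (hy : ContinuousOn y W) (hy0 : y (0, 0) = 0) {φ : ℝ → ℝ} (hφ : ContinuousAt φ 0)
    (hφ0 : φ 0 = 0) (c : ℝ) :
    Tendsto (fun x => ∫ t in (0 : ℝ)..1, 1 / X (x + (φ x - x) * t, y (c * (φ x - x) * t, x)))
      (𝓝 0) (𝓝 (1 / X (0, 0))) := by
  set F := 𝓝 (0 : ℝ) ×ˢ 𝓟 (Ι (0 : ℝ) 1)
  have hchord : Tendsto (fun p : ℝ × ℝ => (φ p.1 - p.1) * p.2) F (𝓝 0) := by
    have hgap : Tendsto (fun x => φ x - x) (𝓝 0) (𝓝 0) := by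
      simpa [hφ0] using hφ.tendsto.sub tendsto_id
    have hbdd : ∀ᶠ p in F, ‖p.2‖ ≤ 1 := by
      refine eventually_prod_principal_iff.2 (Eventually.of_forall fun _ t ht => ?_)
      rw [uIoc_of_le zero_le_one] at ht
      exact abs_le.2 ⟨by linarith [ht.1], ht.2⟩
    exact (hgap.comp tendsto_fst).zero_mul_isBoundedUnder_le
      (isBoundedUnder_of_eventually_le hbdd)
  have hσ : Tendsto (fun p : ℝ × ℝ => (c * (φ p.1 - p.1) * p.2, p.1)) F (𝓝 (0, 0)) := by
    simpa [mul_assoc] using (hchord.const_mul c).prodMk_nhds tendsto_fst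
  have hγ : Tendsto (fun p : ℝ × ℝ =>
      (p.1 + (φ p.1 - p.1) * p.2, y (c * (φ p.1 - p.1) * p.2, p.1))) F (𝓝 (0, 0)) := by
    have := (tendsto_fst.add hchord).prodMk_nhds ((hy.continuousAt hW).tendsto.comp hσ)
    rwa [add_zero, hy0] at this
  have hlim := (tendsto_const_nhds (x := (1 : ℝ))).div ((hX.continuousAt hV).tendsto.comp hγ) hX0
  have hmeas : ∀ᶠ x in 𝓝 (0 : ℝ), AEStronglyMeasurable
      (fun t => 1 / X (x + (φ x - x) * t, y (c * (φ x - x) * t, x)))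
      (volume.restrict (Ι (0 : ℝ) 1)) := by
    filter_upwards [eventually_prod_principal_iff.1 ((hσ.eventually hW).and (hγ.eventually hV))]
      with x hx
    have hyσ : ContinuousOn (fun t => y (c * (φ x - x) * t, x)) (Ι 0 1) :=
      hy.comp (by fun_prop) fun t ht => (hx t ht).1
    have hXγ :
        ContinuousOn (fun t => X (x + (φ x - x) * t, y (c * (φ x - x) * t, x))) (Ι 0 1) :=
      hX.comp ((by fun_prop : ContinuousOn (fun t => x + (φ x - x) * t) _).prodMk hyσ)
        fun t ht => (hx t ht).2
    exact ((hXγ.aestronglyMeasurable measurableSet_uIoc).aemeasurable.const_div 1)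
      |>.aestronglyMeasurable
  have := intervalIntegral.tendsto_integral_of_tendsto_uncurry hmeas hlim
  rwa [sub_zero, one_smul] at this

theorem two_mul_sign_mul_sub_div_pos {a b : ℝ} (h : a * b < 0) :
    0 < 2 * Real.sign a * (b - a) / (a * b) := by
  refine div_pos_of_neg_of_neg ?_ h
  rcases lt_or_gt_of_ne (left_ne_zero_of_mul h.ne) with ha | ha
  · rw [Real.sign_of_neg ha]
    nlinarith
  · rw [Real.sign_of_pos ha]
    nlinarith

theorem stmt6_general (V : Set (ℝ × ℝ)) (hV : IsOpen V) (h0V : ((0:ℝ), (0:ℝ)) ∈ V)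
    (Xp Xm : ℝ × ℝ → ℝ) (hXp : ContinuousOn Xp V) (hXm : ContinuousOn Xm V)
    (hsign : Xp (0, 0) * Xm (0, 0) < 0)
    (δ : ℝ) (hδ : δ = Real.sign (Xp (0, 0)))
    (φ : ℝ → ℝ) (hφ0 : φ 0 = 0) (hφ' : HasDerivAt φ (-1) 0)
    (yp ym : ℝ × ℝ → ℝ)
    (W : Set (ℝ × ℝ)) (hW : W ∈ nhds ((0:ℝ), (0:ℝ)))
    (hypc : ContinuousOn yp W) (hymc : ContinuousOn ym W)
    (hyp0 : yp (0, 0) = 0) (hym0 : ym (0, 0) = 0)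
    (Tp Tm T : ℝ → ℝ)
    (hTp : ∀ x, Tp x = (φ x - x) * ∫ t in (0:ℝ)..1,
        1 / Xp (x + (φ x - x) * t, yp (δ * (φ x - x) * t, x)))
    (hTm : ∀ x, Tm x = (φ x - x) * ∫ t in (0:ℝ)..1,
        1 / Xm (x + (φ x - x) * t, ym (-δ * (φ x - x) * t, x)))
    (hT : ∀ x, T x = δ * (Tm x - Tp x)) :
    T 0 = 0 ∧
      HasDerivAt T (2 * δ * (Xm (0, 0) - Xp (0, 0)) / (Xp (0, 0) * Xm (0, 0))) 0 ∧
      0 < 2 * δ * (Xm (0, 0) - Xp (0, 0)) / (Xp (0, 0) * Xm (0, 0)) := by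
  have hXp00 : Xp (0, 0) ≠ 0 := left_ne_zero_of_mul hsign.ne
  have hXm00 : Xm (0, 0) ≠ 0 := right_ne_zero_of_mul hsign.ne
  have hV0 : V ∈ 𝓝 (0, 0) := hV.mem_nhds h0V
  have hIp := tendsto_integral_one_div_along_chord hV0 hW hXp hXp00 hypc hyp0
    hφ'.continuousAt hφ0 δ
  have hIm := tendsto_integral_one_div_along_chord hV0 hW hXm hXm00 hymc hym0
    hφ'.continuousAt hφ0 (-δ)
  have hderiv := (hφ'.sub (hasDerivAt_id 0)).mul_tendsto_of_apply_eq_zero (by simp [hφ0])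
    (((hIm.sub hIp).const_mul δ).mono_left nhdsWithin_le_nhds)
  refine ⟨by simp [hT, hTm, hTp, hφ0], ?_, hδ ▸ two_mul_sign_mul_sub_div_pos hsign⟩
  refine (hderiv.congr_of_eventuallyEq (Eventually.of_forall fun x => ?_)).congr_deriv ?_
  · simp only [hT, hTm, hTp, Pi.sub_apply, id]
    ring
  · field_simp
    ring

/-- Corollary of Theorem B.
With `X⁺, X⁻` continuous and nonvanishing on a neighborhood `V` of the origin,
`X⁺(0,0)X⁻(0,0) < 0`, `δ = sign X⁺(0,0)`, `φ(0) = 0`, `φ'(0) = −1`, and `y^±` continuous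
near `(0,0)` with `y^±(0,0) = 0`, the period function
`T(x) = δ(T⁻(x) − T⁺(x))`, where
`T^±(x) = (φ(x) − x) ∫₀¹ 1/X^±(x + (φ(x) − x)t, y^±(±δ(φ(x) − x)t, x)) dt`,
satisfies `T(0) = 0` and `T'(0) = 2δ(X⁻(0,0) − X⁺(0,0))/(X⁺(0,0)X⁻(0,0)) > 0`. -/
theorem stmt6 (V : Set (ℝ × ℝ)) (hV : IsOpen V) (h0V : ((0:ℝ), (0:ℝ)) ∈ V)
    (Xp Xm : ℝ × ℝ → ℝ) (hXp : ContinuousOn Xp V) (hXm : ContinuousOn Xm V)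
    (hXp0 : ∀ p ∈ V, Xp p ≠ 0) (hXm0 : ∀ p ∈ V, Xm p ≠ 0)
    (hsign : Xp (0, 0) * Xm (0, 0) < 0)
    (δ : ℝ) (hδ : δ = Real.sign (Xp (0, 0)))
    (φ : ℝ → ℝ) (hφ0 : φ 0 = 0) (hφ' : HasDerivAt φ (-1) 0)
    (yp ym : ℝ × ℝ → ℝ)
    (W : Set (ℝ × ℝ)) (hW : W ∈ nhds ((0:ℝ), (0:ℝ)))
    (hypc : ContinuousOn yp W) (hymc : ContinuousOn ym W)
    (hyp0 : yp (0, 0) = 0) (hym0 : ym (0, 0) = 0)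
    (Tp Tm T : ℝ → ℝ)
    (hTp : ∀ x, Tp x = (φ x - x) * ∫ t in (0:ℝ)..1,
        1 / Xp (x + (φ x - x) * t, yp (δ * (φ x - x) * t, x)))
    (hTm : ∀ x, Tm x = (φ x - x) * ∫ t in (0:ℝ)..1,
        1 / Xm (x + (φ x - x) * t, ym (-δ * (φ x - x) * t, x)))
    (hT : ∀ x, T x = δ * (Tm x - Tp x)) :
    T 0 = 0 ∧
      HasDerivAt T (2 * δ * (Xm (0, 0) - Xp (0, 0)) / (Xp (0, 0) * Xm (0, 0))) 0 ∧
      0 < 2 * δ * (Xm (0, 0) - Xp (0, 0)) / (Xp (0, 0) * Xm (0, 0)) :=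
  stmt6_general V hV h0V Xp Xm hXp hXm hsign δ hδ φ hφ0 hφ' yp ym W hW hypc hymc hyp0 hym0 Tp Tm T
    hTp hTm hT
end

section
/- Let V ⊆ ℝ² be an open neighborhood of the origin, let X⁺, X⁻ : V → ℝ be continuous and nonvanishing on V with X⁺(0,0) X⁻(0,0) < 0, and set δ = sign(X⁺(0,0)). Let φ : ℝ → ℝ satisfy φ(0) = 0 and be differentiable at 0 with φ'(0) = −1, and let y⁺, y⁻ : ℝ × ℝ → ℝ be continuous on a neighborhood of (0, 0) with y⁺(0, 0) = y⁻(0, 0) = 0. For x near 0 define T^±(x) = (φ(x) − x) ∫₀¹ 1/X^±(x + (φ(x) − x)t, y^±(±δ(φ(x) − x)t, x)) dt and T(x) = δ(T⁻(x) − T⁺(x)). Then for every ε > 0 there exist x₁, x₂ ∈ (0, ε) with T(x₁) ≠ T(x₂); that is, T is not constant on any right-neighborhood of 0, so the center is not isochronous. -/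
/-!
Write `T(x) = δ (φ(x) - x) (I⁻(x) - I⁺(x))`, where `I^±` are the integrals over `[0, 1]`.
Along the chords the integrands converge uniformly to `1 / X^±(0, 0)`, so
`I^±(x) → 1 / X^±(0, 0)`, while `(φ(x) - x) / x → -2`. Hence
`T(x) / x → -2δ (1 / X⁻(0, 0) - 1 / X⁺(0, 0))`, which is nonzero because `X⁺(0, 0)` and
`X⁻(0, 0)` have opposite signs. A function with `T(x) / x → L ≠ 0` as `x → 0⁺` is not constant
on any `(0, ε)`: otherwise `T(x / 2) = T(x)` would give `L = 2L`.
-/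

open Filter Topology Set

theorem Filter.Tendsto.mul_snd_prod_principal {ι : Type*} {l : Filter ι} {ψ : ι → ℝ}
    (hψ : Tendsto ψ l (𝓝 0)) {s : Set ℝ} (hs : Bornology.IsBounded s) :
    Tendsto (fun q : ι × ℝ => ψ q.1 * q.2) (l ×ˢ 𝓟 s) (𝓝 0) := by
  obtain ⟨C, hC⟩ := hs.exists_norm_le
  refine (hψ.comp tendsto_fst).zero_mul_isBoundedUnder_le ⟨C, ?_⟩
  exact eventually_map.2 (eventually_prod_principal_iff.2 (.of_forall fun _ => hC))

theorem tendsto_intervalIntegral_of_tendsto_prod_principal {ι E : Type*}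
    [NormedAddCommGroup E] [NormedSpace ℝ E] [CompleteSpace E]
    {l : Filter ι} [l.IsCountablyGenerated] {F : ι → ℝ → E} {a b : ℝ} {c : E} (hF : ∀ᶠ i in l, ContinuousOn (F i) (uIcc a b))
    (h : Tendsto ↿F (l ×ˢ 𝓟 (uIcc a b)) (𝓝 c)) :
    Tendsto (fun i => ∫ t in a..b, F i t) l (𝓝 ((b - a) • c)) := by
  rw [← intervalIntegral.integral_const]
  exact (tendsto_prod_principal_iff.1 h).tendsto_intervalIntegral_of_continuousOn hF

theorem exists_ne_of_tendsto_inv_mul_nhdsGT {f : ℝ → ℝ} {L : ℝ}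
    (hf : Tendsto (fun x => x⁻¹ * f x) (𝓝[>] 0) (𝓝 L)) (hL : L ≠ 0) :
    ∀ ε > 0, ∃ x₁ x₂ : ℝ, x₁ ∈ Ioo 0 ε ∧ x₂ ∈ Ioo 0 ε ∧ f x₁ ≠ f x₂ := by
  intro ε hε
  by_contra! hconst
  have halve : Tendsto (fun x : ℝ => x / 2) (𝓝[>] 0) (𝓝[>] 0) :=
    tendsto_nhdsWithin_iff.2
      ⟨((continuous_id.div_const 2).tendsto' 0 0 (zero_div 2)).mono_left nhdsWithin_le_nhds,
        eventually_nhdsWithin_of_forall fun _ hx => half_pos (mem_Ioi.1 hx)⟩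
  have hdouble : Tendsto (fun x => 2 * (x⁻¹ * f x)) (𝓝[>] 0) (𝓝 L) := by
    refine (hf.comp halve).congr' ?_
    filter_upwards [Ioo_mem_nhdsGT hε] with x hx
    have : f (x / 2) = f x := hconst _ _ ⟨half_pos hx.1, by linarith [hx.2]⟩ hx
    simp only [Function.comp_apply, this]
    field_simp
  have : 2 * L = L := tendsto_nhds_unique (hf.const_mul 2) hdouble
  exact hL (by linarith)

theorem tendsto_integral_inv_comp_chord {X y : ℝ × ℝ → ℝ} {V W : Set (ℝ × ℝ)}
    (hV : V ∈ 𝓝 (0, 0)) (hX : ContinuousOn X V) (hX0 : ∀ p ∈ V, X p ≠ 0)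
    (hW : W ∈ 𝓝 (0, 0)) (hy : ContinuousOn y W) (hy0 : y (0, 0) = 0)
    {ψ : ℝ → ℝ} (hψ : Tendsto ψ (𝓝 0) (𝓝 0)) (c : ℝ) :
    Tendsto (fun x => ∫ t in (0 : ℝ)..1, 1 / X (x + ψ x * t, y (c * ψ x * t, x)))
      (𝓝 0) (𝓝 (1 / X (0, 0))) := by
  set l := 𝓝 (0 : ℝ) ×ˢ 𝓟 (uIcc (0 : ℝ) 1)
  have hchord : Tendsto (fun q : ℝ × ℝ => ψ q.1 * q.2) l (𝓝 0) :=
    hψ.mul_snd_prod_principal isCompact_uIcc.isBounded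
  have hfst : Tendsto (fun q : ℝ × ℝ => q.1) l (𝓝 0) := tendsto_fst
  have hQ : Tendsto (fun q : ℝ × ℝ => (c * ψ q.1 * q.2, q.1)) l (𝓝 (0, 0)) := by
    simpa [mul_assoc] using (hchord.const_mul c).prodMk_nhds hfst
  have hP : Tendsto (fun q : ℝ × ℝ => (q.1 + ψ q.1 * q.2, y (c * ψ q.1 * q.2, q.1))) l
      (𝓝 (0, 0)) := by
    have hyQ := (hy.continuousAt hW).tendsto.comp hQ
    rw [hy0] at hyQ
    simpa using (hfst.add hchord).prodMk_nhds hyQ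
  have hmaps : ∀ᶠ x in 𝓝 (0 : ℝ), ∀ t ∈ uIcc (0 : ℝ) 1,
      (c * ψ x * t, x) ∈ W ∧ (x + ψ x * t, y (c * ψ x * t, x)) ∈ V :=
    eventually_prod_principal_iff.1 ((hQ.eventually_mem hW).and (hP.eventually_mem hV))
  have hcont : ∀ᶠ x in 𝓝 (0 : ℝ), ContinuousOn
      (fun t => 1 / X (x + ψ x * t, y (c * ψ x * t, x))) (uIcc 0 1) := by
    filter_upwards [hmaps] with x hx
    have hyx : ContinuousOn (fun t : ℝ => y (c * ψ x * t, x)) (uIcc 0 1) :=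
      hy.comp (by fun_prop) fun t ht => (hx t ht).1
    have hXx : ContinuousOn (fun t : ℝ => X (x + ψ x * t, y (c * ψ x * t, x))) (uIcc 0 1) :=
      hX.comp ((by fun_prop : Continuous fun t : ℝ => x + ψ x * t).continuousOn.prodMk hyx)
        fun t ht => (hx t ht).2
    exact continuousOn_const.div hXx fun t ht => hX0 _ (hx t ht).2
  have hlim : Tendsto (fun q : ℝ × ℝ => 1 / X (q.1 + ψ q.1 * q.2, y (c * ψ q.1 * q.2, q.1))) l
      (𝓝 (1 / X (0, 0))) := by
    simpa only [one_div, Function.comp_def] using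
      ((hX.continuousAt hV).tendsto.comp hP).inv₀ (hX0 _ (mem_of_mem_nhds hV))
  simpa using tendsto_intervalIntegral_of_tendsto_prod_principal hcont hlim

/-- Theorem A, analytic form: tangential centers are never isochronous.
Under the hypotheses of the Corollary of Theorem B, the period function
`T(x) = δ(T⁻(x) − T⁺(x))` is not constant on any right-neighborhood of `0`: for every
`ε > 0` there exist `x₁, x₂ ∈ (0, ε)` with `T(x₁) ≠ T(x₂)`. -/
theorem stmt7 (V : Set (ℝ × ℝ)) (hV : IsOpen V) (h0V : ((0:ℝ), (0:ℝ)) ∈ V)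
    (Xp Xm : ℝ × ℝ → ℝ) (hXp : ContinuousOn Xp V) (hXm : ContinuousOn Xm V)
    (hXp0 : ∀ p ∈ V, Xp p ≠ 0) (hXm0 : ∀ p ∈ V, Xm p ≠ 0)
    (hsign : Xp (0, 0) * Xm (0, 0) < 0)
    (δ : ℝ) (hδ : δ = Real.sign (Xp (0, 0)))
    (φ : ℝ → ℝ) (hφ0 : φ 0 = 0) (hφ' : HasDerivAt φ (-1) 0)
    (yp ym : ℝ × ℝ → ℝ)
    (W : Set (ℝ × ℝ)) (hW : W ∈ nhds ((0:ℝ), (0:ℝ)))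
    (hypc : ContinuousOn yp W) (hymc : ContinuousOn ym W)
    (hyp0 : yp (0, 0) = 0) (hym0 : ym (0, 0) = 0)
    (Tp Tm T : ℝ → ℝ)
    (hTp : ∀ x, Tp x = (φ x - x) * ∫ t in (0:ℝ)..1,
        1 / Xp (x + (φ x - x) * t, yp (δ * (φ x - x) * t, x)))
    (hTm : ∀ x, Tm x = (φ x - x) * ∫ t in (0:ℝ)..1,
        1 / Xm (x + (φ x - x) * t, ym (-δ * (φ x - x) * t, x)))
    (hT : ∀ x, T x = δ * (Tm x - Tp x)) :
    ∀ ε > 0, ∃ x₁ x₂ : ℝ, x₁ ∈ Set.Ioo 0 ε ∧ x₂ ∈ Set.Ioo 0 ε ∧ T x₁ ≠ T x₂ := by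
  have hVn : V ∈ 𝓝 (0, 0) := hV.mem_nhds h0V
  have hψ : HasDerivAt (fun x => φ x - x) (-2) 0 :=
    (hφ'.sub (hasDerivAt_id' 0)).congr_deriv (by norm_num)
  have hψ0 : Tendsto (fun x => φ x - x) (𝓝 0) (𝓝 0) := by
    simpa [hφ0] using hψ.continuousAt.tendsto
  have hslope : Tendsto (fun x => x⁻¹ * (φ x - x)) (𝓝[>] 0) (𝓝 (-2)) := by
    simpa [hφ0] using hψ.tendsto_slope_zero_right
  have hIp := tendsto_integral_inv_comp_chord hVn hXp hXp0 hW hypc hyp0 hψ0 δ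
  have hIm := tendsto_integral_inv_comp_chord hVn hXm hXm0 hW hymc hym0 hψ0 (-δ)
  have hδ0 : δ ≠ 0 := by
    rw [hδ, Ne, Real.sign_eq_zero_iff]
    exact hXp0 _ h0V
  have hgap : 1 / Xm (0, 0) - 1 / Xp (0, 0) ≠ 0 := by
    intro h
    have : Xm (0, 0) = Xp (0, 0) := by simpa using (sub_eq_zero.1 h)
    rw [this] at hsign
    exact (mul_self_nonneg _).not_gt hsign
  have hL : δ * (-2) * (1 / Xm (0, 0) - 1 / Xp (0, 0)) ≠ 0 :=
    mul_ne_zero (mul_ne_zero hδ0 (by norm_num)) hgap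
  refine exists_ne_of_tendsto_inv_mul_nhdsGT ?_ hL
  refine ((tendsto_const_nhds.mul hslope).mul ((hIm.sub hIp).mono_left nhdsWithin_le_nhds)).congr
    fun x => ?_
  simp only [hT, hTm, hTp, neg_mul]
  ring
end

section
/- Let V ⊆ ℝ² be an open neighborhood of the origin, let X⁺, Y⁺, X⁻, Y⁻ : V → ℝ be continuous, and let δ ∈ {−1, 1} be such that δ X⁺(p) > 0 and δ X⁻(p) < 0 for all p ∈ V. Fix x, x* ∈ ℝ. Suppose y⁺ : ℝ → ℝ is differentiable on the closed interval I⁺ between 0 and δ(x* − x) with y⁺(0) = 0, y⁺(δ(x* − x)) = 0, (x + δs, y⁺(s)) ∈ V and (y⁺)'(s) = δ Y⁺(x + δs, y⁺(s))/X⁺(x + δs, y⁺(s)) for all s ∈ I⁺; and suppose y⁻ : ℝ → ℝ is differentiable on the closed interval I⁻ between 0 and −δ(x* − x) with y⁻(0) = 0, y⁻(−δ(x* − x)) = 0, (x − δs, y⁻(s)) ∈ V and (y⁻)'(s) = −δ Y⁻(x − δs, y⁻(s))/X⁻(x − δs, y⁻(s)) for all s ∈ I⁻. Define T^± = (x* −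 x) ∫₀¹ 1/X^±(x + (x* − x)t, y^±(±δ(x* − x)t)) dt. Then there exist differentiable curves σ⁺, σ⁻, with σ^± defined on the closed interval between 0 and T^± and taking values in V, such that σ^±(0) = (x, 0), σ^±(T^±) = (x*, 0), and (σ^±)'(t) = (X^±(σ^±(t)), Y^±(σ^±(t))) for all t in the respective interval. -/
/-!
For `ε = ±1`, the curve `γ(s) = (x + εs, y(s))` is an integral curve of the rescaled field
`Z / (εX)`, whose first component is the constant `ε`. Undoing the rescaling is a change of
time: the solution of the scalar autonomous equation `s' = εX(γ(s))` from `0` reaches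
`c = ε(x* − x)` at time `∫₀^c du / (εX(γ u))`, and `γ ∘ s` is then an integral curve of `Z`.
The substitution `u = ct` turns that time into `T^±`. The piece `Z⁻` is the case `ε = −δ`.
-/

open Set Filter intervalIntegral

theorem surjective_of_hasDerivAt_ge {f f' : ℝ → ℝ} {c : ℝ} (hc : 0 < c)
    (hf : ∀ r, HasDerivAt f (f' r) r) (hf' : ∀ r, c ≤ f' r) : Function.Surjective f := by
  have hmono : Monotone fun r => f r - c * r :=
    monotone_of_hasDerivAt_nonneg (fun r => (hf r).sub ((hasDerivAt_id' r).const_mul c))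
      fun r => by simpa using hf' r
  have hge (r : ℝ) (hr : 0 ≤ r) : f 0 + c * r ≤ f r := by linarith [hmono hr]
  have hle (r : ℝ) (hr : r ≤ 0) : f r ≤ f 0 + c * r := by linarith [hmono hr]
  refine (continuous_iff_continuousAt.2 fun r => (hf r).continuousAt).surjective ?_ ?_
  · exact tendsto_atTop_mono' _ ((eventually_ge_atTop 0).mono hge)
      (tendsto_atTop_add_const_left _ (f 0) (tendsto_id.const_mul_atTop hc))
  · exact tendsto_atBot_mono' _ ((eventually_le_atBot 0).mono hle)
      (tendsto_atBot_add_const_left _ (f 0) (tendsto_id.const_mul_atBot hc))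

theorem exists_orderIso_hasDerivAt_symm {f f' : ℝ → ℝ} {c : ℝ} (hc : 0 < c)
    (hf : ∀ r, HasDerivAt f (f' r) r) (hf' : ∀ r, c ≤ f' r) :
    ∃ e : ℝ ≃o ℝ, ⇑e = f ∧ ∀ t, HasDerivAt e.symm (f' (e.symm t))⁻¹ t := by
  have hpos : ∀ r, 0 < f' r := fun r => hc.trans_le (hf' r)
  let e := (strictMono_of_hasDerivAt_pos hf hpos).orderIsoOfSurjective f
    (surjective_of_hasDerivAt_ge hc hf hf')
  refine ⟨e, rfl, fun t => ?_⟩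
  exact (hf _).of_local_left_inverse e.symm.continuous.continuousAt (hpos _).ne'
    (Eventually.of_forall e.apply_symm_apply)

theorem exists_hasDerivAt_eq_of_continuousOn_pos {ρ : ℝ → ℝ} {c : ℝ}
    (hρ : ContinuousOn ρ (uIcc 0 c)) (hρpos : ∀ u ∈ uIcc 0 c, 0 < ρ u) :
    ∃ s : ℝ → ℝ, s 0 = 0 ∧ s (∫ u in 0..c, (ρ u)⁻¹) = c ∧
      ∀ t ∈ uIcc 0 (∫ u in 0..c, (ρ u)⁻¹), s t ∈ uIcc 0 c ∧ HasDerivAt s (ρ (s t)) t := by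
  -- Extending `ρ` constantly outside `[0, c]` makes the time change a global diffeomorphism,
  -- so its inverse is differentiable also at the endpoints of `[0, T]`.
  set ρ' : ℝ → ℝ := IccExtend inf_le_sup ((uIcc 0 c).domRestrict ρ)
  have hρ'_eq : EqOn ρ' ρ (uIcc 0 c) := fun u hu => IccExtend_of_mem _ _ hu
  have hρ'_mem (r : ℝ) : ∃ u ∈ uIcc 0 c, ρ' r = ρ u := ⟨_, (projIcc _ _ _ r).2, rfl⟩
  have hρ'_pos (r : ℝ) : 0 < ρ' r := by
    obtain ⟨u, hu, hr⟩ := hρ'_mem r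
    exact hr ▸ hρpos u hu
  obtain ⟨u₀, hu₀, hmax⟩ := isCompact_uIcc.exists_isMaxOn nonempty_uIcc hρ
  have hρ'_le (r : ℝ) : (ρ u₀)⁻¹ ≤ (ρ' r)⁻¹ := by
    obtain ⟨u, hu, hr⟩ := hρ'_mem r
    exact inv_anti₀ (hρ'_pos r) (hr ▸ hmax hu)
  have hτ (r : ℝ) : HasDerivAt (fun r => ∫ u in 0..r, (ρ' u)⁻¹) (ρ' r)⁻¹ r :=
    ((hρ.domRestrict.Icc_extend'.inv₀ fun u => (hρ'_pos u).ne').integral_hasStrictDerivAt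
      0 r).hasDerivAt
  obtain ⟨e, he, hsymm⟩ :=
    exists_orderIso_hasDerivAt_symm (inv_pos.2 (hρpos u₀ hu₀)) hτ hρ'_le
  have hT : e c = ∫ u in 0..c, (ρ u)⁻¹ := by
    rw [he]
    exact integral_congr fun u hu => by simp only [hρ'_eq hu]
  have hs0 : e.symm 0 = 0 := e.symm_apply_eq.2 (by simp [he])
  have hsT : e.symm (∫ u in 0..c, (ρ u)⁻¹) = c := by rw [← hT, e.symm_apply_apply]
  refine ⟨e.symm, hs0, hsT, fun t ht => ?_⟩
  have hst : e.symm t ∈ uIcc 0 c := hs0 ▸ hsT ▸ e.symm.monotone.mapsTo_uIcc ht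
  exact ⟨hst, by simpa only [inv_inv, hρ'_eq hst] using hsymm t⟩

theorem exists_trajectory_of_reparametrized_graph {V : Set (ℝ × ℝ)} {X Y : ℝ × ℝ → ℝ}
    (hX : ContinuousOn X V) {ε : ℝ} (hε : ε = -1 ∨ ε = 1) (hXpos : ∀ p ∈ V, 0 < ε * X p)
    {x xs : ℝ} {y : ℝ → ℝ} (hy0 : y 0 = 0) (hyc : y (ε * (xs - x)) = 0)
    (hyV : ∀ s ∈ uIcc 0 (ε * (xs - x)), (x + ε * s, y s) ∈ V)
    (hyode : ∀ s ∈ uIcc 0 (ε * (xs - x)),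
      HasDerivAt y (ε * Y (x + ε * s, y s) / X (x + ε * s, y s)) s)
    {T : ℝ} (hT : T = (xs - x) * ∫ t in (0:ℝ)..1,
        1 / X (x + (xs - x) * t, y (ε * (xs - x) * t))) :
    ∃ σ : ℝ → ℝ × ℝ, σ 0 = (x, 0) ∧ σ T = (xs, 0) ∧
      ∀ t ∈ uIcc 0 T, σ t ∈ V ∧ HasDerivAt σ (X (σ t), Y (σ t)) t := by
  have hεε : ε * ε = 1 := by rcases hε with rfl | rfl <;> norm_num
  set c := ε * (xs - x) with hc
  have hεc : ε * c = xs - x := by rw [hc, ← mul_assoc, hεε, one_mul]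
  set γ : ℝ → ℝ × ℝ := fun u => (x + ε * u, y u)
  have hγ : ∀ u ∈ uIcc 0 c, HasDerivAt γ (ε, ε * Y (γ u) / X (γ u)) u := fun u hu => by
    simpa only [mul_one] using
      (((hasDerivAt_id' u).const_mul ε).const_add x).prodMk (hyode u hu)
  have hXγ : ∀ u ∈ uIcc 0 c, 0 < ε * X (γ u) := fun u hu => hXpos _ (hyV u hu)
  have hρ : ContinuousOn (fun u => ε * X (γ u)) (uIcc 0 c) :=
    continuousOn_const.mul (hX.comp (fun u hu => (hγ u hu).continuousAt.continuousWithinAt) hyV)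
  have hT' : T = ∫ u in 0..c, (ε * X (γ u))⁻¹ := by
    have := smul_integral_comp_mul_left (a := 0) (b := 1) (fun u => (ε * X (γ u))⁻¹) c
    rw [mul_zero, mul_one] at this
    rw [← this, hT, smul_eq_mul, ← integral_const_mul, ← integral_const_mul]
    refine integral_congr fun t _ => ?_
    simp only [γ, ← mul_assoc, hεc, mul_inv, inv_eq_of_mul_eq_one_right hεε]
    rw [mul_comm c ε, hεc, one_div]
  obtain ⟨s, hs0, hsT, hs⟩ := exists_hasDerivAt_eq_of_continuousOn_pos hρ hXγ
  rw [← hT'] at hsT hs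
  refine ⟨γ ∘ s, by simp [γ, hs0, hy0], by simp [γ, hsT, hyc, hεc], fun t ht => ?_⟩
  obtain ⟨hst, hs't⟩ := hs t ht
  refine ⟨hyV _ hst, ((hγ _ hst).scomp t hs't).congr_deriv ?_⟩
  have hX0 : X (γ (s t)) ≠ 0 := right_ne_zero_of_mul (hXγ _ hst).ne'
  ext
  · simp only [Function.comp_apply, Prod.smul_mk, smul_eq_mul]
    linear_combination X (γ (s t)) * hεε
  · simp only [Function.comp_apply, Prod.smul_mk, smul_eq_mul]
    field_simp
    linear_combination Y (γ (s t)) * hεε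

theorem stmt11_general (V : Set (ℝ × ℝ))
    (Xp Yp Xm Ym : ℝ × ℝ → ℝ)
    (hXp : ContinuousOn Xp V)
    (hXm : ContinuousOn Xm V)
    (δ : ℝ) (hδ : δ = -1 ∨ δ = 1)
    (hXppos : ∀ p ∈ V, 0 < δ * Xp p) (hXmneg : ∀ p ∈ V, δ * Xm p < 0)
    (x xs : ℝ)
    (yp : ℝ → ℝ) (hyp0 : yp 0 = 0) (hypτ : yp (δ * (xs - x)) = 0)
    (hypV : ∀ s ∈ Set.uIcc 0 (δ * (xs - x)), (x + δ * s, yp s) ∈ V)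
    (hypode : ∀ s ∈ Set.uIcc 0 (δ * (xs - x)),
      HasDerivAt yp (δ * Yp (x + δ * s, yp s) / Xp (x + δ * s, yp s)) s)
    (ym : ℝ → ℝ) (hym0 : ym 0 = 0) (hymτ : ym (-δ * (xs - x)) = 0)
    (hymV : ∀ s ∈ Set.uIcc 0 (-δ * (xs - x)), (x - δ * s, ym s) ∈ V)
    (hymode : ∀ s ∈ Set.uIcc 0 (-δ * (xs - x)),
      HasDerivAt ym (-δ * Ym (x - δ * s, ym s) / Xm (x - δ * s, ym s)) s)
    (Tp Tm : ℝ)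
    (hTp : Tp = (xs - x) * ∫ t in (0:ℝ)..1,
        1 / Xp (x + (xs - x) * t, yp (δ * (xs - x) * t)))
    (hTm : Tm = (xs - x) * ∫ t in (0:ℝ)..1,
        1 / Xm (x + (xs - x) * t, ym (-δ * (xs - x) * t))) :
    (∃ σp : ℝ → ℝ × ℝ, σp 0 = (x, 0) ∧ σp Tp = (xs, 0) ∧
        ∀ t ∈ Set.uIcc 0 Tp, σp t ∈ V ∧
          HasDerivAt σp (Xp (σp t), Yp (σp t)) t) ∧
      (∃ σm : ℝ → ℝ × ℝ, σm 0 = (x, 0) ∧ σm Tm = (xs, 0) ∧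
        ∀ t ∈ Set.uIcc 0 Tm, σm t ∈ V ∧
          HasDerivAt σm (Xm (σm t), Ym (σm t)) t) := by
  refine ⟨exists_trajectory_of_reparametrized_graph hXp hδ hXppos hyp0 hypτ hypV hypode hTp,
    exists_trajectory_of_reparametrized_graph hXm (ε := -δ) ?_ ?_ hym0 hymτ ?_ ?_ hTm⟩
  · rcases hδ with rfl | rfl <;> norm_num
  · exact fun p hp => by simpa only [neg_mul, neg_pos] using hXmneg p hp
  · simpa only [neg_mul, ← sub_eq_add_neg] using hymV
  · simpa only [neg_mul, ← sub_eq_add_neg] using hymode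

/-- Theorem B.
For a Filippov vector field with pieces `Z⁺ = (X⁺, Y⁺)` (where `δX⁺ > 0`) and
`Z⁻ = (X⁻, Y⁻)` (where `δX⁻ < 0`) on `V`, if `y⁺` and `y⁻` are the second coordinates of
the trajectories of the time-reparametrized fields `Z^±/|X^±|` through `(x, 0)` which
return to `(x*, 0)` at the times `±δ(x* − x)`, then, setting
`T^± = (x* − x) ∫₀¹ 1/X^±(x + (x* − x)t, y^±(±δ(x* − x)t)) dt`, there exist differentiable
curves `σ^±` defined on the closed interval between `0` and `T^±`, with values in `V`,
with `σ^±(0) = (x, 0)`, `σ^±(T^±) = (x*, 0)`, and `(σ^±)'(t) = Z^±(σ^±(t))`. -/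
theorem stmt11 (V : Set (ℝ × ℝ)) (hV : IsOpen V)
    (Xp Yp Xm Ym : ℝ × ℝ → ℝ)
    (hXp : ContinuousOn Xp V) (hYp : ContinuousOn Yp V)
    (hXm : ContinuousOn Xm V) (hYm : ContinuousOn Ym V)
    (δ : ℝ) (hδ : δ = -1 ∨ δ = 1)
    (hXppos : ∀ p ∈ V, 0 < δ * Xp p) (hXmneg : ∀ p ∈ V, δ * Xm p < 0)
    (x xs : ℝ)
    (yp : ℝ → ℝ) (hyp0 : yp 0 = 0) (hypτ : yp (δ * (xs - x)) = 0)
    (hypV : ∀ s ∈ Set.uIcc 0 (δ * (xs - x)), (x + δ * s, yp s) ∈ V)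
    (hypode : ∀ s ∈ Set.uIcc 0 (δ * (xs - x)),
      HasDerivAt yp (δ * Yp (x + δ * s, yp s) / Xp (x + δ * s, yp s)) s)
    (ym : ℝ → ℝ) (hym0 : ym 0 = 0) (hymτ : ym (-δ * (xs - x)) = 0)
    (hymV : ∀ s ∈ Set.uIcc 0 (-δ * (xs - x)), (x - δ * s, ym s) ∈ V)
    (hymode : ∀ s ∈ Set.uIcc 0 (-δ * (xs - x)),
      HasDerivAt ym (-δ * Ym (x - δ * s, ym s) / Xm (x - δ * s, ym s)) s)
    (Tp Tm : ℝ)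
    (hTp : Tp = (xs - x) * ∫ t in (0:ℝ)..1,
        1 / Xp (x + (xs - x) * t, yp (δ * (xs - x) * t)))
    (hTm : Tm = (xs - x) * ∫ t in (0:ℝ)..1,
        1 / Xm (x + (xs - x) * t, ym (-δ * (xs - x) * t))) :
    (∃ σp : ℝ → ℝ × ℝ, σp 0 = (x, 0) ∧ σp Tp = (xs, 0) ∧
        ∀ t ∈ Set.uIcc 0 Tp, σp t ∈ V ∧
          HasDerivAt σp (Xp (σp t), Yp (σp t)) t) ∧
      (∃ σm : ℝ → ℝ × ℝ, σm 0 = (x, 0) ∧ σm Tm = (xs, 0) ∧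
        ∀ t ∈ Set.uIcc 0 Tm, σm t ∈ V ∧
          HasDerivAt σm (Xm (σm t), Ym (σm t)) t) :=
  stmt11_general V Xp Yp Xm Ym hXp hXm δ hδ hXppos hXmneg x xs yp hyp0 hypτ hypV hypode ym hym0 hymτ
    hymV hymode Tp Tm hTp hTm
end
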